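/- Let P be a d-dimensional polytope in ℝ^d with inradius g and roof Γ(P) = {(x, t) ∈ ℝ^d × ℝ : 0 ≤ t ≤ g, x ∈ P(t)} ⊆ ℝ^{d+1}. Then vol_{d+1}(Γ(P)) = ∫₀^∞ vol_d(P(ρ)) dρ, and more generally W_{Γ(P)}(r) = vol_{d+1}(Γ(P)(r)) = ∫_{(1+√2)r}^∞ vol_d(P(ρ)) dρ for all r ≥ 0; consequently W'_{Γ(P)}(r) = −(1+√2)·W_P((1+√2)r) for all r ∈ [0, +∞). -/

import Mathlib

open MeasureTheory Metric Set Real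
open scoped RealInnerProductSpace

/-- The `r`-interior of a set `P`: points of `P` at distance at least `r` from `∂P`. -/
noncomputable def innerInterior {d : ℕ} (P : Set (EuclideanSpace ℝ (Fin d))) (r : ℝ) :
    Set (EuclideanSpace ℝ (Fin d)) :=
  {x ∈ P | r ≤ infDist x (frontier P)}

/-- The inradius of `P`: the largest `r` such that `P` contains a closed ball of radius `r`. -/
noncomputable def inradius {d : ℕ} (P : Set (EuclideanSpace ℝ (Fin d))) : ℝ :=
  sSup {r : ℝ | ∃ x, closedBall x r ⊆ P}

/-- The roof of a `d`-polytope `P` with inradius `g`: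
`Γ(P) = {(x,t) : 0 ≤ t ≤ g, x ∈ P(t)} ⊆ ℝ^{d+1}`. -/
noncomputable def roofOf {d : ℕ} (P : Set (EuclideanSpace ℝ (Fin d))) (g : ℝ) :
    Set (EuclideanSpace ℝ (Fin (d + 1))) :=
  {y | 0 ≤ y (Fin.last d) ∧ y (Fin.last d) ≤ g ∧
    (WithLp.toLp 2 (fun i : Fin d => y i.castSucc) : EuclideanSpace ℝ (Fin d)) ∈
      innerInterior P (y (Fin.last d))}



section HalfSpaces
variable {n : ℕ} {ι : Type} [Fintype ι] [Nonempty ι]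

/-- intersection of shifted halfspaces -/
def Qset (N : ι → EuclideanSpace ℝ (Fin n)) (c : ι → ℝ) (r : ℝ) :
    Set (EuclideanSpace ℝ (Fin n)) :=
  ⋂ j, {x | c j + r ≤ ⟪x, N j⟫}

variable {N : ι → EuclideanSpace ℝ (Fin n)} {c : ι → ℝ}

lemma mem_Qset {r : ℝ} {x : EuclideanSpace ℝ (Fin n)} :
    x ∈ Qset N c r ↔ ∀ j, c j + r ≤ ⟪x, N j⟫ := by
  simp [Qset]

lemma continuous_inner_right (v : EuclideanSpace ℝ (Fin n)) :
    Continuous fun x : EuclideanSpace ℝ (Fin n) => (⟪x, v⟫ : ℝ) :=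
  Continuous.inner continuous_id continuous_const

lemma isClosed_Qset (r : ℝ) : IsClosed (Qset N c r) :=
  isClosed_iInter fun j => isClosed_le continuous_const (continuous_inner_right (N j))

lemma Qset_antitone : Antitone fun r => Qset N c r := by
  intro r s hrs x hx
  rw [mem_Qset] at hx ⊢
  intro j
  linarith [hx j]

lemma measurableSet_Qset (r : ℝ) : MeasurableSet (Qset N c r) :=
  (isClosed_Qset r).measurableSet

lemma interior_Qset (hN : ∀ j, ‖N j‖ = 1) (r : ℝ) :
    interior (Qset N c r) = {x | ∀ j, c j + r < ⟪x, N j⟫} := by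
  apply Subset.antisymm
  · intro x hx j
    rcases Metric.mem_nhds_iff.1 (mem_interior_iff_mem_nhds.1 hx) with ⟨ε, hε, hball⟩
    have hxball : x - (ε / 2) • N j ∈ Qset N c r := by
      apply hball
      simp only [mem_ball, dist_self_sub_left, norm_smul, Real.norm_eq_abs, hN j]
      rw [abs_of_pos (by linarith)]
      linarith
    have := (mem_Qset.1 hxball) j
    rw [inner_sub_left, real_inner_smul_left, real_inner_self_eq_norm_sq, hN j] at this
    nlinarith
  · intro x hx
    have hopen : IsOpen {y : EuclideanSpace ℝ (Fin n) | ∀ j, c j + r < ⟪y, N j⟫} := by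
      rw [setOf_forall]
      exact isOpen_iInter_of_finite fun j =>
        isOpen_lt continuous_const (continuous_inner_right (N j))
    exact interior_maximal (fun y hy => mem_Qset.2 fun j => (hy j).le) hopen hx

lemma frontier_Qset (hN : ∀ j, ‖N j‖ = 1) (r : ℝ) :
    frontier (Qset N c r) = {x | (∀ j, c j + r ≤ ⟪x, N j⟫) ∧ ∃ j, ⟪x, N j⟫ = c j + r} := by
  rw [(isClosed_Qset r).frontier_eq, interior_Qset hN r]
  ext x
  simp only [mem_diff, mem_setOf_eq, mem_Qset (N := N)]
  constructor
  · rintro ⟨h1, h2⟩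
    push_neg at h2
    obtain ⟨j, hj⟩ := h2
    exact ⟨h1, j, le_antisymm hj (h1 j)⟩
  · rintro ⟨h1, j, hj⟩
    refine ⟨h1, ?_⟩
    push_neg
    exact ⟨j, hj.le⟩

lemma frontier_Qset_nonempty (hn : 0 < n) (hN : ∀ j, ‖N j‖ = 1)
    (hQc : IsCompact (Qset N c 0)) (hQi : (interior (Qset N c 0)).Nonempty) :
    (frontier (Qset N c 0)).Nonempty := by
  by_contra h
  rw [not_nonempty_iff_eq_empty] at h
  have hclopen : IsClopen (Qset N c 0) := by
    constructor
    · exact isClosed_Qset 0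
    · have h2 : Qset N c 0 \ interior (Qset N c 0) = (∅ : Set (EuclideanSpace ℝ (Fin n))) := by
        rw [← (isClosed_Qset (N := N) (c := c) 0).frontier_eq, h]
      have : interior (Qset N c 0) = Qset N c 0 :=
        Subset.antisymm interior_subset (diff_eq_empty.1 h2)
      rw [← this]
      exact isOpen_interior
  haveI : Nontrivial (EuclideanSpace ℝ (Fin n)) := by
    refine ⟨EuclideanSpace.single ⟨0, hn⟩ 1, 0, ?_⟩
    intro heq
    have := congrArg (fun v : EuclideanSpace ℝ (Fin n) => v ⟨0, hn⟩) heq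
    simp [EuclideanSpace.single_apply] at this
  rcases isClopen_iff.1 hclopen with h0 | h1
  · rw [h0] at hQi
    simp at hQi
  · exact hQc.ne_univ h1

lemma le_infDist_frontier (hn : 0 < n) (hN : ∀ j, ‖N j‖ = 1)
    (hQc : IsCompact (Qset N c 0)) (hQi : (interior (Qset N c 0)).Nonempty)
    {x : EuclideanSpace ℝ (Fin n)} {r : ℝ} (hx : ∀ j, c j + r ≤ ⟪x, N j⟫) :
    r ≤ infDist x (frontier (Qset N c 0)) := by
  have hne := frontier_Qset_nonempty hn hN hQc hQi
  by_contra hlt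
  push_neg at hlt
  rcases (infDist_lt_iff hne).1 hlt with ⟨y, hy, hdy⟩
  rw [frontier_Qset hN 0] at hy
  obtain ⟨hyall, j, hj⟩ := hy
  have h1 : r ≤ ⟪x - y, N j⟫ := by
    rw [inner_sub_left, hj]
    linarith [hx j]
  have h2 : ⟪x - y, N j⟫ ≤ ‖x - y‖ := by
    calc ⟪x - y, N j⟫ ≤ ‖x - y‖ * ‖N j‖ := real_inner_le_norm _ _
    _ = ‖x - y‖ := by rw [hN j, mul_one]
  rw [dist_eq_norm] at hdy
  linarith

lemma infDist_le_slack (hN : ∀ j, ‖N j‖ = 1)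
    {x : EuclideanSpace ℝ (Fin n)} (hx : x ∈ Qset N c 0) (k : ι) :
    infDist x (frontier (Qset N c 0)) ≤ ⟪x, N k⟫ - c k := by
  have hune : (Finset.univ : Finset ι).Nonempty := Finset.univ_nonempty
  set f := Finset.univ.inf' hune (fun j => ⟪x, N j⟫ - c j) with hf
  obtain ⟨j, -, hj⟩ := Finset.exists_mem_eq_inf' hune (fun j => ⟪x, N j⟫ - c j)
  have hf_nonneg : 0 ≤ f := by
    rw [hf, hj]
    have := mem_Qset.1 hx j
    linarith
  have hfle : ∀ m, f ≤ ⟪x, N m⟫ - c m := fun m => Finset.inf'_le _ (Finset.mem_univ m)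
  set z := x - f • N j with hz
  have hzmem : z ∈ frontier (Qset N c 0) := by
    rw [frontier_Qset hN 0]
    constructor
    · intro l
      have h1 : (⟪z, N l⟫ : ℝ) = ⟪x, N l⟫ - f * ⟪N j, N l⟫ := by
        rw [hz, inner_sub_left, real_inner_smul_left]
      have h2 : (⟪N j, N l⟫ : ℝ) ≤ 1 := by
        calc (⟪N j, N l⟫ : ℝ) ≤ ‖N j‖ * ‖N l‖ := real_inner_le_norm _ _
        _ = 1 := by rw [hN j, hN l, mul_one]
      have h3 : f * ⟪N j, N l⟫ ≤ f := by nlinarith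
      have := hfle l
      rw [h1]
      linarith
    · refine ⟨j, ?_⟩
      have h1 : (⟪z, N j⟫ : ℝ) = ⟪x, N j⟫ - f * ⟪N j, N j⟫ := by
        rw [hz, inner_sub_left, real_inner_smul_left]
      rw [h1, real_inner_self_eq_norm_sq, hN j, hf, hj]
      ring
  calc infDist x (frontier (Qset N c 0)) ≤ dist x z := infDist_le_dist_of_mem hzmem
  _ = f := by
    rw [hz, dist_eq_norm, sub_sub_cancel, norm_smul, Real.norm_eq_abs, hN j, mul_one,
      abs_of_nonneg hf_nonneg]
  _ ≤ ⟪x, N k⟫ - c k := hfle k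

lemma innerInterior_Qset (hn : 0 < n) (hN : ∀ j, ‖N j‖ = 1)
    (hQc : IsCompact (Qset N c 0)) (hQi : (interior (Qset N c 0)).Nonempty)
    {r : ℝ} (hr : 0 ≤ r) :
    innerInterior (Qset N c 0) r = Qset N c r := by
  ext x
  constructor
  · rintro ⟨hxQ, hxd⟩
    rw [mem_Qset]
    intro j
    have := infDist_le_slack hN hxQ j
    linarith
  · intro hx
    have hx' := mem_Qset.1 hx
    refine ⟨mem_Qset.2 fun j => by linarith [hx' j], ?_⟩
    exact le_infDist_frontier hn hN hQc hQi hx'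

lemma le_inradius_Qset (hn : 0 < n) (hN : ∀ j, ‖N j‖ = 1) (hQc : IsCompact (Qset N c 0))
    {x : EuclideanSpace ℝ (Fin n)} {t : ℝ} (ht : 0 ≤ t) (hx : ∀ j, c j + t ≤ ⟪x, N j⟫) :
    t ≤ inradius (Qset N c 0) := by
  set S := {r : ℝ | ∃ y, closedBall y r ⊆ Qset N c 0} with hS
  obtain ⟨R, hR⟩ := hQc.isBounded.subset_closedBall 0
  set e : EuclideanSpace ℝ (Fin n) := EuclideanSpace.single (⟨0, hn⟩ : Fin n) (1 : ℝ) with he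
  have henorm : ‖e‖ = 1 := by rw [he, EuclideanSpace.norm_single]; norm_num
  have hbdd : BddAbove S := by
    refine ⟨2 * max R 0, ?_⟩
    rintro r ⟨y, hy⟩
    rcases le_or_gt r 0 with h | h
    · have : (0:ℝ) ≤ 2 * max R 0 := by positivity
      linarith
    · have h1 : y ∈ closedBall (0 : EuclideanSpace ℝ (Fin n)) R := hR (hy (mem_closedBall_self h.le))
      have h2 : y + r • e ∈ closedBall (0 : EuclideanSpace ℝ (Fin n)) R := by
        apply hR; apply hy
        simp only [mem_closedBall, dist_self_add_left, norm_smul, Real.norm_eq_abs, henorm,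
          mul_one, abs_of_pos h, le_refl]
      rw [mem_closedBall, dist_zero_right] at h1 h2
      have h3 : r = ‖(y + r • e) - y‖ := by
        rw [add_sub_cancel_left, norm_smul, Real.norm_eq_abs, henorm, mul_one, abs_of_pos h]
      have h4 : ‖(y + r • e) - y‖ ≤ ‖y + r • e‖ + ‖y‖ := norm_sub_le _ _
      have : r ≤ R + R := by rw [h3]; exact h4.trans (by gcongr)
      have hR0 : R ≤ max R 0 := le_max_left _ _
      linarith
  have htS : t ∈ S := by
    refine ⟨x, fun y hy => ?_⟩
    rw [mem_closedBall, dist_eq_norm] at hy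
    rw [mem_Qset]
    intro j
    have h1 : |⟪y - x, N j⟫| ≤ ‖y - x‖ := by
      have := abs_real_inner_le_norm (y - x) (N j)
      rw [hN j, mul_one] at this
      exact this
    have h2 : (⟪y, N j⟫ : ℝ) = ⟪x, N j⟫ + ⟪y - x, N j⟫ := by rw [inner_sub_left]; ring
    have := hx j
    have := abs_le.1 h1
    rw [h2]
    linarith [this.1]
  exact le_csSup hbdd htS

lemma Qset_eq_empty_of_gt_inradius (hn : 0 < n) (hN : ∀ j, ‖N j‖ = 1)
    (hQc : IsCompact (Qset N c 0)) {t : ℝ} (ht : 0 ≤ t)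
    (hgt : inradius (Qset N c 0) < t) : Qset N c t = ∅ := by
  rw [eq_empty_iff_forall_notMem]
  intro x hx
  exact absurd (le_inradius_Qset hn hN hQc ht (mem_Qset.1 hx)) (not_le.2 hgt)


section Roof
variable {ι : Type} [Fintype ι] [Nonempty ι] {d : ℕ}



/-- append a last coordinate, as an element of Euclidean space -/
noncomputable def snocE (v : EuclideanSpace ℝ (Fin d)) (a : ℝ) : EuclideanSpace ℝ (Fin (d+1)) :=
  (WithLp.equiv 2 (∀ _ : Fin (d+1), ℝ)).symm (Fin.snoc (fun i => v i) a)

@[simp] lemma snocE_castSucc (v : EuclideanSpace ℝ (Fin d)) (a : ℝ) (i : Fin d) :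
    snocE v a i.castSucc = v i := by
  simp [snocE]

@[simp] lemma snocE_last (v : EuclideanSpace ℝ (Fin d)) (a : ℝ) :
    snocE v a (Fin.last d) = a := by
  simp [snocE]

noncomputable def roofN (N : ι → EuclideanSpace ℝ (Fin d)) : Option ι → EuclideanSpace ℝ (Fin (d+1))
  | none => EuclideanSpace.single (Fin.last d) (1:ℝ)
  | some j => (Real.sqrt 2)⁻¹ • snocE (N j) (-1)

noncomputable def roofC (c : ι → ℝ) : Option ι → ℝ
  | none => 0
  | some j => (Real.sqrt 2)⁻¹ * c j

/-- projection to first d coordinates -/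
def projE (y : EuclideanSpace ℝ (Fin (d+1))) : EuclideanSpace ℝ (Fin d) :=
  WithLp.toLp 2 fun i => y i.castSucc

variable {N : ι → EuclideanSpace ℝ (Fin d)} {c : ι → ℝ}

lemma inner_roofN_none (y : EuclideanSpace ℝ (Fin (d+1))) :
    (⟪y, roofN N none⟫ : ℝ) = y (Fin.last d) := by
  rw [roofN, EuclideanSpace.inner_single_right]
  simp

lemma inner_roofN_some (y : EuclideanSpace ℝ (Fin (d+1))) (j : ι) :
    (⟪y, roofN N (some j)⟫ : ℝ) =
      (Real.sqrt 2)⁻¹ * ((⟪projE y, N j⟫ : ℝ) - y (Fin.last d)) := by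
  rw [roofN, real_inner_smul_right]
  congr 1
  rw [PiLp.inner_apply, PiLp.inner_apply, Fin.sum_univ_castSucc]
  simp only [RCLike.inner_apply, conj_trivial, snocE_castSucc, snocE_last, projE, PiLp.toLp_apply]
  ring

lemma sum_sq_eq_one {j : ι} (hNj : ‖N j‖ = 1) : ∑ i, (N j i)^2 = 1 := by
  have h := real_inner_self_eq_norm_sq (N j)
  rw [hNj, PiLp.inner_apply] at h
  simp only [RCLike.inner_apply, conj_trivial] at h
  norm_num at h
  simp only [pow_two]
  exact h


lemma norm_roofN (hN : ∀ j, ‖N j‖ = 1) : ∀ j', ‖roofN N j'‖ = 1 := by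
  rintro (_ | j)
  · rw [roofN, EuclideanSpace.norm_single]; norm_num
  · rw [roofN, norm_smul, Real.norm_eq_abs, abs_of_pos (by positivity : (0:ℝ) < (Real.sqrt 2)⁻¹)]
    have hnorm : ‖snocE (N j) (-1 : ℝ)‖ = Real.sqrt 2 := by
      rw [EuclideanSpace.norm_eq]
      have hsum : (∑ i : Fin (d+1), ‖snocE (N j) (-1 : ℝ) i‖^2) = 2 := by
        rw [Fin.sum_univ_castSucc]
        simp only [snocE_castSucc, snocE_last, Real.norm_eq_abs, sq_abs]
        rw [sum_sq_eq_one (hN j)]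
        norm_num
      rw [hsum]
    rw [hnorm]
    rw [inv_mul_cancel₀ (by positivity : Real.sqrt 2 ≠ 0)]

lemma sqrt2_facts : (0:ℝ) < Real.sqrt 2 ∧ Real.sqrt 2 * Real.sqrt 2 = 2 :=
  ⟨Real.sqrt_pos.2 (by norm_num), Real.mul_self_sqrt (by norm_num)⟩

lemma mem_roofQset {r : ℝ} {y : EuclideanSpace ℝ (Fin (d+1))} :
    y ∈ Qset (roofN N) (roofC c) r ↔
      r ≤ y (Fin.last d) ∧ projE y ∈ Qset N c (y (Fin.last d) + Real.sqrt 2 * r) := by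
  obtain ⟨hs2, hs2'⟩ := sqrt2_facts
  have hinv : (0:ℝ) < (Real.sqrt 2)⁻¹ := by positivity
  rw [mem_Qset, mem_Qset, Option.forall]
  rw [roofC, inner_roofN_none]
  constructor
  · rintro ⟨h0, hsome⟩
    refine ⟨by linarith, fun j => ?_⟩
    have := hsome j
    rw [roofC, inner_roofN_some] at this
    have hss : Real.sqrt 2 * (Real.sqrt 2)⁻¹ = 1 := mul_inv_cancel₀ (ne_of_gt hs2)
    have key := mul_le_mul_of_nonneg_left this hs2.le
    rw [mul_add, ← mul_assoc, hss, one_mul, ← mul_assoc, hss, one_mul] at key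
    linarith
  · rintro ⟨h0, hall⟩
    refine ⟨by linarith, fun j => ?_⟩
    have := hall j
    rw [roofC, inner_roofN_some]
    have hss' : (Real.sqrt 2)⁻¹ * Real.sqrt 2 = 1 := inv_mul_cancel₀ (ne_of_gt hs2)
    have key := mul_le_mul_of_nonneg_left this hinv.le
    have e1 : (Real.sqrt 2)⁻¹ * (Real.sqrt 2 * r) = r := by rw [← mul_assoc, hss', one_mul]
    rw [mul_add, mul_add, e1] at key
    rw [mul_sub]
    linarith

lemma roofQset_isCompact (hN : ∀ j, ‖N j‖ = 1) (hPc : IsCompact (Qset N c 0)) :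
    IsCompact (Qset (roofN N) (roofC c) 0) := by
  obtain ⟨hs2, hs2'⟩ := sqrt2_facts
  rw [Metric.isCompact_iff_isClosed_bounded]
  refine ⟨isClosed_Qset 0, ?_⟩
  obtain ⟨R, hR⟩ := hPc.isBounded.subset_closedBall 0
  obtain ⟨j₀⟩ := ‹Nonempty ι›
  rw [isBounded_iff_forall_norm_le]
  set R' := max R 0 with hR'
  set B := max (R - c j₀) 0 with hB
  refine ⟨Real.sqrt (R'^2 + B^2), fun y hy => ?_⟩
  rw [mem_roofQset] at hy
  obtain ⟨ht0, hx⟩ := hy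
  simp only [mul_zero, add_zero] at hx
  set t := y (Fin.last d) with htdef
  set x := projE y with hxdef
  have hxP : x ∈ Qset N c 0 := Qset_antitone (by linarith : (0:ℝ) ≤ t) hx
  have hxR : ‖x‖ ≤ R := by
    have := hR hxP
    rwa [mem_closedBall, dist_zero_right] at this
  have htB : t ≤ B := by
    have h1 := mem_Qset.1 hx j₀
    have h2 : (⟪x, N j₀⟫ : ℝ) ≤ ‖x‖ := by
      have := real_inner_le_norm x (N j₀)
      rwa [hN j₀, mul_one] at this
    have : t ≤ R - c j₀ := by linarith
    exact this.trans (le_max_left _ _)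
  have hxR' : ‖x‖ ≤ R' := hxR.trans (le_max_left _ _)
  have hB0 : 0 ≤ B := le_max_right _ _
  rw [EuclideanSpace.norm_eq]
  apply Real.sqrt_le_sqrt
  rw [Fin.sum_univ_castSucc]
  have hxnorm : (∑ i : Fin d, ‖y i.castSucc‖^2) = ‖x‖^2 := by
    rw [EuclideanSpace.norm_eq x, Real.sq_sqrt (by positivity)]
    rfl
  rw [hxnorm]
  have h1 : ‖x‖^2 ≤ R'^2 := by nlinarith [norm_nonneg x]
  have h2 : ‖y (Fin.last d)‖^2 ≤ B^2 := by
    rw [Real.norm_eq_abs, sq_abs]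
    nlinarith
  linarith

lemma roofQset_interior_nonempty (hN : ∀ j, ‖N j‖ = 1)
    (hPi : (interior (Qset N c 0)).Nonempty) :
    (interior (Qset (roofN N) (roofC c) 0)).Nonempty := by
  obtain ⟨hs2, hs2'⟩ := sqrt2_facts
  have hinv : (0:ℝ) < (Real.sqrt 2)⁻¹ := by positivity
  obtain ⟨x0, hx0⟩ := hPi
  rw [interior_Qset hN 0] at hx0
  have hune : (Finset.univ : Finset ι).Nonempty := Finset.univ_nonempty
  set ε := (Finset.univ.inf' hune (fun j => ⟪x0, N j⟫ - c j)) / 2 with hε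
  have hε0 : 0 < ε := by
    rw [hε]
    obtain ⟨j, -, hj⟩ := Finset.exists_mem_eq_inf' hune (fun j => ⟪x0, N j⟫ - c j)
    rw [hj]
    have := hx0 j
    linarith
  have hεlt : ∀ j, ε < ⟪x0, N j⟫ - c j := by
    intro j
    have h1 : Finset.univ.inf' hune (fun j => ⟪x0, N j⟫ - c j) ≤ ⟪x0, N j⟫ - c j :=
      Finset.inf'_le _ (Finset.mem_univ j)
    rw [hε]
    linarith
  refine ⟨snocE x0 ε, ?_⟩
  rw [interior_Qset (norm_roofN hN) 0]
  rintro (_ | j)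
  · rw [roofC, inner_roofN_none, snocE_last]
    linarith
  · rw [roofC, inner_roofN_some]
    have hproj : projE (snocE x0 ε) = x0 := by
      ext i
      rw [projE, PiLp.toLp_apply, snocE_castSucc]
    rw [hproj, snocE_last]
    have := hεlt j
    have h3 : c j < ⟪x0, N j⟫ - ε := by linarith
    calc (Real.sqrt 2)⁻¹ * c j + 0 = (Real.sqrt 2)⁻¹ * c j := by ring
    _ < (Real.sqrt 2)⁻¹ * ((⟪x0, N j⟫ : ℝ) - ε) := by
        exact (mul_lt_mul_iff_right₀ hinv).2 h3

lemma lintegral_Ici_shift (f : ℝ → ENNReal) (a k : ℝ) :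
    ∫⁻ t in Ici a, f (t + k) = ∫⁻ s in Ici (a + k), f s := by
  rw [← lintegral_indicator measurableSet_Ici, ← lintegral_indicator measurableSet_Ici]
  have heq : ∀ t, (Ici a).indicator (fun u => f (u + k)) t = (Ici (a+k)).indicator f (t + k) := by
    intro t
    by_cases h : a ≤ t
    · rw [indicator_of_mem (mem_Ici.2 h), indicator_of_mem (mem_Ici.2 (by linarith))]
    · rw [indicator_of_notMem (fun hc => h (mem_Ici.1 hc)),
        indicator_of_notMem (fun hc => h (by have := mem_Ici.1 hc; linarith))]
  rw [lintegral_congr heq]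
  exact lintegral_add_right_eq_self ((Ici (a+k)).indicator f) k

lemma volume_roofQset (hN : ∀ j, ‖N j‖ = 1) (r : ℝ) :
    volume (Qset (roofN N) (roofC c) r)
      = ∫⁻ ρ in Ioi ((1 + Real.sqrt 2) * r), volume (Qset N c ρ) := by
  set e1 := (MeasurableEquiv.toLp 2 (Fin (d+1) → ℝ)).symm with he1
  set e2 := MeasurableEquiv.piFinSuccAbove (fun _ : Fin (d+1) => ℝ) (Fin.last d) with he2
  have h1 := EuclideanSpace.volume_preserving_symm_measurableEquiv_toLp (Fin (d+1))
  have h2 := volume_preserving_piFinSuccAbove (fun _ : Fin (d+1) => ℝ) (Fin.last d)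
  have hcomp : MeasurePreserving (⇑e2 ∘ ⇑e1) volume volume := h2.comp h1
  set T : Set (ℝ × (Fin d → ℝ)) :=
    {p | r ≤ p.1 ∧ ∀ j, c j + (p.1 + Real.sqrt 2 * r) ≤ ∑ i, p.2 i * N j i} with hT
  have hTclosed : IsClosed T := by
    have hrw : T = {p : ℝ × (Fin d → ℝ) | r ≤ p.1} ∩
        ⋂ j, {p : ℝ × (Fin d → ℝ) | c j + (p.1 + Real.sqrt 2 * r) ≤ ∑ i, p.2 i * N j i} := by
      ext p
      simp only [hT, mem_setOf_eq, mem_inter_iff, mem_iInter]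
    rw [hrw]
    refine (isClosed_le continuous_const continuous_fst).inter (isClosed_iInter fun j => ?_)
    exact isClosed_le (continuous_const.add (continuous_fst.add continuous_const))
      (continuous_finset_sum _ fun i _ => ((continuous_apply i).comp continuous_snd).mul
        continuous_const)
  have hTmeas : MeasurableSet T := hTclosed.measurableSet
  have hpre : (⇑e2 ∘ ⇑e1) ⁻¹' T = Qset (roofN N) (roofC c) r := by
    ext y
    simp only [mem_preimage, Function.comp_apply]
    rw [mem_roofQset, mem_Qset]
    have hfst : (e2 (e1 y)).1 = y (Fin.last d) := rfl
    have hsnd : ∀ i : Fin d, (e2 (e1 y)).2 i = y i.castSucc := by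
      intro i
      show y ((Fin.last d).succAbove i) = y i.castSucc
      rw [Fin.succAbove_last]
    have hinner : ∀ j, (⟪projE y, N j⟫ : ℝ) = ∑ i, (e2 (e1 y)).2 i * N j i := by
      intro j
      rw [PiLp.inner_apply]
      simp only [RCLike.inner_apply, conj_trivial]
      refine Finset.sum_congr rfl fun i _ => ?_
      rw [hsnd i]
      exact mul_comm _ _
    constructor
    · rintro ⟨hp1, hp2⟩
      rw [hfst] at hp1
      refine ⟨hp1, fun j => ?_⟩
      have := hp2 j
      rw [← hinner j] at this
      linarith
    · rintro ⟨hp1, hp2⟩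
      refine ⟨by rw [hfst]; exact hp1, fun j => ?_⟩
      have := hp2 j
      rw [← hinner j]
      linarith
  have hvol : volume (Qset (roofN N) (roofC c) r) = volume T := by
    rw [← hpre]
    exact hcomp.measure_preimage hTmeas.nullMeasurableSet
  rw [hvol, Measure.volume_eq_prod, Measure.prod_apply hTmeas]
  have hslice : ∀ t : ℝ, volume (Prod.mk t ⁻¹' T)
      = (Ici r).indicator (fun u => volume (Qset N c (u + Real.sqrt 2 * r))) t := by
    intro t
    by_cases ht : r ≤ t
    · rw [indicator_of_mem (mem_Ici.2 ht)]
      have hD := (EuclideanSpace.volume_preserving_symm_measurableEquiv_toLp (Fin d)).symm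
      have hset : Prod.mk t ⁻¹' T
          = (⇑(MeasurableEquiv.toLp 2 (Fin d → ℝ)).symm.symm) ⁻¹'
              (Qset N c (t + Real.sqrt 2 * r)) := by
        ext x
        simp only [mem_preimage, hT, mem_setOf_eq]
        rw [mem_Qset]
        have hx : ∀ j, (⟪(MeasurableEquiv.toLp 2 (Fin d → ℝ)).symm.symm x, N j⟫ : ℝ)
            = ∑ i, x i * N j i := by
          intro j
          rw [PiLp.inner_apply]
          simp only [RCLike.inner_apply, conj_trivial]
          exact Finset.sum_congr rfl fun i _ => mul_comm _ _
        constructor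
        · rintro ⟨-, h⟩ j
          rw [hx j]
          have := h j
          linarith
        · intro h
          refine ⟨ht, fun j => ?_⟩
          have := h j
          rw [hx j] at this
          linarith
      rw [hset]
      exact hD.measure_preimage (measurableSet_Qset _).nullMeasurableSet
    · rw [indicator_of_notMem (fun hc => ht (mem_Ici.1 hc))]
      have : Prod.mk t ⁻¹' T = (∅ : Set (Fin d → ℝ)) := by
        ext x
        simp only [mem_preimage, hT, mem_setOf_eq, mem_empty_iff_false, iff_false, not_and]
        intro hc
        exact absurd hc ht
      rw [this, measure_empty]
  rw [lintegral_congr hslice, lintegral_indicator measurableSet_Ici]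
  rw [lintegral_Ici_shift (fun ρ => volume (Qset N c ρ)) r (Real.sqrt 2 * r)]
  have harg : r + Real.sqrt 2 * r = (1 + Real.sqrt 2) * r := by ring
  rw [harg, Measure.restrict_congr_set Ioi_ae_eq_Ici]

end Roof

lemma innerInterior_subset {P : Set (EuclideanSpace ℝ (Fin n))} {r : ℝ} :
    innerInterior P r ⊆ P := sep_subset _ _

lemma innerInterior_antitone (P : Set (EuclideanSpace ℝ (Fin n))) :
    Antitone (innerInterior P) := fun r s hrs x hx => ⟨hx.1, le_trans hrs hx.2⟩

lemma innerInterior_of_nonpos {P : Set (EuclideanSpace ℝ (Fin n))} {r : ℝ} (hr : r ≤ 0) :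
    innerInterior P r = P := by
  ext x
  exact ⟨fun hx => hx.1, fun hx => ⟨hx, hr.trans infDist_nonneg⟩⟩

lemma measurableSet_innerInterior {P : Set (EuclideanSpace ℝ (Fin n))} (hP : IsClosed P)
    (r : ℝ) : MeasurableSet (innerInterior P r) := by
  have : innerInterior P r = P ∩ {x | r ≤ infDist x (frontier P)} := rfl
  rw [this]
  exact (hP.inter (isClosed_le continuous_const (continuous_infDist_pt _))).measurableSet

lemma volume_hyperplane {v : EuclideanSpace ℝ (Fin n)} (hv : v ≠ 0) (b : ℝ) :
    volume {x : EuclideanSpace ℝ (Fin n) | ⟪x, v⟫ = b} = 0 := by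
  set f : EuclideanSpace ℝ (Fin n) →L[ℝ] ℝ := innerSL ℝ v with hf
  have hvv : (⟪v, v⟫ : ℝ) ≠ 0 := by
    rw [real_inner_self_eq_norm_sq]
    have : ‖v‖ ≠ 0 := norm_ne_zero_iff.2 hv
    positivity
  set x₀ : EuclideanSpace ℝ (Fin n) := (b / ⟪v, v⟫) • v with hx₀
  have hfx₀ : f x₀ = b := by
    have : f x₀ = ⟪v, x₀⟫ := by rw [hf]; simp only [innerSL_apply_apply]
    rw [this, hx₀, real_inner_smul_right]
    exact div_mul_cancel₀ b hvv
  set S : AffineSubspace ℝ (EuclideanSpace ℝ (Fin n)) :=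
    AffineSubspace.mk' x₀ (LinearMap.ker (f : EuclideanSpace ℝ (Fin n) →ₗ[ℝ] ℝ)) with hS
  have hset : {x : EuclideanSpace ℝ (Fin n) | ⟪x, v⟫ = b} = ↑S := by
    ext x
    rw [hS, mem_setOf_eq, AffineSubspace.mem_coe, AffineSubspace.mem_mk']
    have : x -ᵥ x₀ ∈ LinearMap.ker (f : EuclideanSpace ℝ (Fin n) →ₗ[ℝ] ℝ) ↔ f (x - x₀) = 0 :=
      Iff.rfl
    rw [this]
    rw [map_sub, hfx₀]
    constructor
    · intro h
      rw [hf]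
      simp only [innerSL_apply_apply]
      rw [real_inner_comm] at h
      linarith
    · intro h
      have : f x = ⟪x, v⟫ := by rw [hf]; simp only [innerSL_apply_apply]; rw [real_inner_comm]
      rw [← this]
      linarith
  rw [hset]
  apply Measure.addHaar_affineSubspace
  intro hc
  have hdir := AffineSubspace.direction_mk' x₀
    (LinearMap.ker (f : EuclideanSpace ℝ (Fin n) →ₗ[ℝ] ℝ))
  rw [← hS, hc, AffineSubspace.direction_top] at hdir
  have : f v = 0 := by
    have := LinearMap.ker_eq_top.1 hdir.symm
    have h2 : (f : EuclideanSpace ℝ (Fin n) →ₗ[ℝ] ℝ) v = 0 := by rw [this]; rfl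
    exact h2
  rw [hf] at this
  simp only [innerSL_apply_apply] at this
  exact hvv this

variable {N : ι → EuclideanSpace ℝ (Fin n)} {c : ι → ℝ}

lemma inradius_nonneg_Qset (hn : 0 < n) (hN : ∀ j, ‖N j‖ = 1)
    (hQc : IsCompact (Qset N c 0)) (hQi : (interior (Qset N c 0)).Nonempty) :
    0 ≤ inradius (Qset N c 0) := by
  obtain ⟨x0, hx0⟩ := hQi
  rw [interior_Qset hN 0] at hx0
  exact le_inradius_Qset hn hN hQc le_rfl (fun j => by simpa using (hx0 j).le)

lemma volume_innerInterior_ne_top (hQc : IsCompact (Qset N c 0)) (ρ : ℝ) :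
    volume (innerInterior (Qset N c 0) ρ) ≠ ⊤ :=
  ((measure_mono innerInterior_subset).trans_lt hQc.measure_lt_top).ne

lemma tendsto_h_left (hQc : IsCompact (Qset N c 0)) (a : ℝ) :
    Filter.Tendsto
      (fun m : ℕ => (volume (innerInterior (Qset N c 0) (a - 1/((m:ℝ)+1)))).toReal)
      Filter.atTop (nhds ((volume (innerInterior (Qset N c 0) a)).toReal)) := by
  set P := Qset N c 0 with hPdef
  have hPclosed : IsClosed P := isClosed_Qset 0
  have hfin := volume_innerInterior_ne_top (N := N) (c := c) hQc
  set s : ℕ → Set (EuclideanSpace ℝ (Fin n)) :=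
    fun m => innerInterior P (a - 1/((m:ℝ)+1)) with hs
  have hanti : Antitone s := by
    intro m m' hmm'
    apply innerInterior_antitone
    have h1 : (1:ℝ)/((m':ℝ)+1) ≤ 1/((m:ℝ)+1) := by
      apply one_div_le_one_div_of_le (by positivity)
      have : (m:ℝ) ≤ (m':ℝ) := by exact_mod_cast hmm'
      linarith
    linarith
  have hinter : ⋂ m, s m = innerInterior P a := by
    ext x
    simp only [mem_iInter]
    constructor
    · intro hx
      refine ⟨(hx 0).1, ?_⟩
      have ht : Filter.Tendsto (fun m : ℕ => a - 1/((m:ℝ)+1)) Filter.atTop (nhds a) := by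
        have h2 := (tendsto_const_nhds (x := a) (f := (Filter.atTop : Filter ℕ))).sub
          tendsto_one_div_add_atTop_nhds_zero_nat
        simpa using h2
      exact le_of_tendsto ht (Filter.Eventually.of_forall fun m => (hx m).2)
    · intro hx m
      refine ⟨hx.1, ?_⟩
      have : (0:ℝ) < 1/((m:ℝ)+1) := by positivity
      linarith [hx.2]
  have h1 := tendsto_measure_iInter_atTop
    (fun m => (measurableSet_innerInterior hPclosed _).nullMeasurableSet) hanti ⟨0, hfin _⟩
  rw [hinter] at h1
  exact (ENNReal.tendsto_toReal (hfin a)).comp h1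

lemma tendsto_h_right (hn : 0 < n) (hN : ∀ j, ‖N j‖ = 1) (hQc : IsCompact (Qset N c 0))
    (hQi : (interior (Qset N c 0)).Nonempty) {a : ℝ} (ha : 0 ≤ a) :
    Filter.Tendsto
      (fun m : ℕ => (volume (innerInterior (Qset N c 0) (a + 1/((m:ℝ)+1)))).toReal)
      Filter.atTop (nhds ((volume (innerInterior (Qset N c 0) a)).toReal)) := by
  set P := Qset N c 0 with hPdef
  have hfin := volume_innerInterior_ne_top (N := N) (c := c) hQc
  set u : ℕ → Set (EuclideanSpace ℝ (Fin n)) := fun m => Qset N c (a + 1/((m:ℝ)+1)) with hu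
  have hchar : ∀ m : ℕ, innerInterior P (a + 1/((m:ℝ)+1)) = u m := by
    intro m
    exact innerInterior_Qset hn hN hQc hQi (by positivity)
  have hmono : Monotone u := by
    intro m m' hmm'
    apply Qset_antitone
    have h1 : (1:ℝ)/((m':ℝ)+1) ≤ 1/((m:ℝ)+1) := by
      apply one_div_le_one_div_of_le (by positivity)
      have : (m:ℝ) ≤ (m':ℝ) := by exact_mod_cast hmm'
      linarith
    linarith
  set O : Set (EuclideanSpace ℝ (Fin n)) := {x | ∀ j, c j + a < ⟪x, N j⟫} with hO
  have hUnion : ⋃ m, u m = O := by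
    ext x
    simp only [mem_iUnion, hO, mem_setOf_eq]
    constructor
    · rintro ⟨m, hm⟩ j
      have := mem_Qset.1 hm j
      have hpos : (0:ℝ) < 1/((m:ℝ)+1) := by positivity
      linarith
    · intro hx
      have hune : (Finset.univ : Finset ι).Nonempty := Finset.univ_nonempty
      set δ := Finset.univ.inf' hune (fun j => ⟪x, N j⟫ - (c j + a)) with hδ
      have hδpos : 0 < δ := by
        rw [hδ]
        obtain ⟨j, -, hj⟩ := Finset.exists_mem_eq_inf' hune (fun j => ⟪x, N j⟫ - (c j + a))
        rw [hj]
        linarith [hx j]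
      obtain ⟨m, hm⟩ := exists_nat_one_div_lt hδpos
      refine ⟨m, mem_Qset.2 fun j => ?_⟩
      have h1 : δ ≤ ⟪x, N j⟫ - (c j + a) := Finset.inf'_le _ (Finset.mem_univ j)
      linarith
  have hON : volume O = volume (Qset N c a) := by
    apply le_antisymm
    · exact measure_mono fun x hx => mem_Qset.2 fun j => (hx j).le
    · have hsub : Qset N c a ⊆ O ∪ ⋃ j, {x : EuclideanSpace ℝ (Fin n) | ⟪x, N j⟫ = c j + a} := by
        intro x hx
        by_cases hstrict : ∀ j, c j + a < ⟪x, N j⟫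
        · exact Or.inl hstrict
        · push_neg at hstrict
          obtain ⟨j, hj⟩ := hstrict
          exact Or.inr (mem_iUnion.2 ⟨j, le_antisymm hj (mem_Qset.1 hx j)⟩)
      calc volume (Qset N c a) ≤ volume (O ∪ ⋃ j, {x : EuclideanSpace ℝ (Fin n) |
            ⟪x, N j⟫ = c j + a}) := measure_mono hsub
      _ ≤ volume O + volume (⋃ j, {x : EuclideanSpace ℝ (Fin n) | ⟪x, N j⟫ = c j + a}) :=
          measure_union_le _ _
      _ = volume O := by
          rw [measure_iUnion_null fun j => volume_hyperplane (fun hc => by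
            have := hN j; rw [hc] at this; simp at this) (c j + a), add_zero]
  have h1 := tendsto_measure_iUnion_atTop (μ := volume) hmono
  rw [hUnion, hON] at h1
  have h2 : volume (Qset N c a) = volume (innerInterior P a) := by
    rw [innerInterior_Qset hn hN hQc hQi ha]
  rw [h2] at h1
  have h3 := (ENNReal.tendsto_toReal (hfin a)).comp h1
  refine h3.congr fun m => ?_
  simp only [Function.comp_apply, hchar m]

lemma continuousAt_hfun (hn : 0 < n) (hN : ∀ j, ‖N j‖ = 1) (hQc : IsCompact (Qset N c 0))
    (hQi : (interior (Qset N c 0)).Nonempty) {a : ℝ} (ha : 0 ≤ a) :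
    ContinuousAt (fun ρ => (volume (innerInterior (Qset N c 0) ρ)).toReal) a := by
  set P := Qset N c 0 with hPdef
  have hfin := volume_innerInterior_ne_top (N := N) (c := c) hQc
  set h : ℝ → ℝ := fun ρ => (volume (innerInterior P ρ)).toReal with hh
  have hanti : Antitone h := fun ρ σ hle =>
    ENNReal.toReal_mono (hfin ρ) (measure_mono (innerInterior_antitone P hle))
  rw [Metric.continuousAt_iff]
  intro ε hε
  obtain ⟨m₁, hm₁⟩ := (Metric.tendsto_atTop.1 (tendsto_h_left hQc a)) ε hε
  obtain ⟨m₂, hm₂⟩ := (Metric.tendsto_atTop.1 (tendsto_h_right hn hN hQc hQi ha)) ε hε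
  have h₁ := hm₁ m₁ le_rfl
  have h₂ := hm₂ m₂ le_rfl
  rw [Real.dist_eq] at h₁ h₂
  set δ₁ : ℝ := 1/((m₁:ℝ)+1) with hδ₁
  set δ₂ : ℝ := 1/((m₂:ℝ)+1) with hδ₂
  have hδ₁pos : 0 < δ₁ := by positivity
  have hδ₂pos : 0 < δ₂ := by positivity
  refine ⟨min δ₁ δ₂, lt_min hδ₁pos hδ₂pos, fun {ρ} hρ => ?_⟩
  rw [Real.dist_eq] at hρ ⊢
  have habs := abs_lt.1 hρ
  rcases le_or_gt ρ a with hle | hlt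
  · have hρ1 : a - δ₁ < ρ := by
      have : min δ₁ δ₂ ≤ δ₁ := min_le_left _ _
      linarith [habs.1]
    have hb1 : h ρ ≤ h (a - δ₁) := hanti hρ1.le
    have hb2 : h a ≤ h ρ := hanti hle
    have hb3 : h (a - δ₁) - h a < ε := by
      have := abs_lt.1 h₁
      linarith [this.1, this.2]
    rw [abs_lt]
    constructor <;> linarith
  · have hρ2 : ρ < a + δ₂ := by
      have : min δ₁ δ₂ ≤ δ₂ := min_le_right _ _
      linarith [habs.2]
    have hb1 : h (a + δ₂) ≤ h ρ := hanti hρ2.le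
    have hb2 : h ρ ≤ h a := hanti hlt.le
    have hb3 : h a - h (a + δ₂) < ε := by
      have := abs_lt.1 h₂
      linarith [this.1, this.2]
    rw [abs_lt]
    constructor <;> linarith

lemma roofOf_eq (hd : 0 < n) (hN : ∀ j, ‖N j‖ = 1) (hPc : IsCompact (Qset N c 0))
    (hPi : (interior (Qset N c 0)).Nonempty) :
    roofOf (Qset N c 0) (inradius (Qset N c 0)) = Qset (roofN N) (roofC c) 0 := by
  ext y
  rw [roofOf, mem_setOf_eq, mem_roofQset]
  simp only [mul_zero, add_zero]
  constructor
  · rintro ⟨ht0, htg, hxin⟩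
    rw [innerInterior_Qset hd hN hPc hPi ht0] at hxin
    exact ⟨ht0, hxin⟩
  · rintro ⟨ht0, hx⟩
    refine ⟨ht0, le_inradius_Qset hd hN hPc ht0 (mem_Qset.1 hx), ?_⟩
    rw [innerInterior_Qset hd hN hPc hPi ht0]
    exact hx

lemma innerInterior_empty_of_gt_inradius (hn : 0 < n) (hN : ∀ j, ‖N j‖ = 1)
    (hQc : IsCompact (Qset N c 0)) {ρ : ℝ} (hρ0 : 0 ≤ ρ)
    (hρ : inradius (Qset N c 0) < ρ) : innerInterior (Qset N c 0) ρ = ∅ := by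
  rw [eq_empty_iff_forall_notMem]
  rintro x ⟨hxP, hxd⟩
  have hslack : ∀ j, c j + ρ ≤ ⟪x, N j⟫ := fun j => by
    have := infDist_le_slack hN hxP j
    linarith
  exact absurd (le_inradius_Qset hn hN hQc hρ0 hslack) (not_le.2 hρ)

lemma measurable_hfun (hQc : IsCompact (Qset N c 0)) :
    Measurable (fun ρ => (volume (innerInterior (Qset N c 0) ρ)).toReal) := by
  have hfin := volume_innerInterior_ne_top (N := N) (c := c) hQc
  exact Antitone.measurable (fun ρ σ hle =>
    ENNReal.toReal_mono (hfin ρ) (measure_mono (innerInterior_antitone _ hle)))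

lemma integrableOn_hfun_finite (hQc : IsCompact (Qset N c 0)) {s : Set ℝ}
    (hs : volume s ≠ ⊤) :
    IntegrableOn (fun ρ => (volume (innerInterior (Qset N c 0) ρ)).toReal) s := by
  have hfin := volume_innerInterior_ne_top (N := N) (c := c) hQc
  refine Measure.integrableOn_of_bounded hs
    ((measurable_hfun hQc).aestronglyMeasurable) (M := (volume (Qset N c 0)).toReal) ?_
  filter_upwards with ρ
  rw [Real.norm_eq_abs, abs_of_nonneg ENNReal.toReal_nonneg]
  exact ENNReal.toReal_mono hQc.measure_lt_top.ne (measure_mono innerInterior_subset)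

lemma integrableOn_hfun_Ioi (hn : 0 < n) (hN : ∀ j, ‖N j‖ = 1)
    (hQc : IsCompact (Qset N c 0)) (hQi : (interior (Qset N c 0)).Nonempty) (b : ℝ) :
    IntegrableOn (fun ρ => (volume (innerInterior (Qset N c 0) ρ)).toReal) (Ioi b) := by
  set h : ℝ → ℝ := fun ρ => (volume (innerInterior (Qset N c 0) ρ)).toReal with hh
  set g := inradius (Qset N c 0) with hg
  have hg0 : 0 ≤ g := inradius_nonneg_Qset hn hN hQc hQi
  set G := max b g with hG
  have heq : EqOn ((Ioc b G).indicator h) h (Ioi b) := by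
    intro ρ hρ
    rcases le_or_gt ρ G with hle | hgt
    · rw [indicator_of_mem (mem_Ioc.2 ⟨mem_Ioi.1 hρ, hle⟩)]
    · rw [indicator_of_notMem (fun hc => absurd (mem_Ioc.1 hc).2 (not_le.2 hgt))]
      have hρg : g < ρ := lt_of_le_of_lt (le_max_right b g) hgt
      have hρ0 : 0 ≤ ρ := hg0.trans hρg.le
      rw [hh]
      simp only
      rw [innerInterior_empty_of_gt_inradius hn hN hQc hρ0 hρg, measure_empty,
        ENNReal.toReal_zero]
  have hind : Integrable ((Ioc b G).indicator h) volume :=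
    (integrable_indicator_iff measurableSet_Ioc).2
      (integrableOn_hfun_finite hQc measure_Ioc_lt_top.ne)
  exact IntegrableOn.congr_fun hind.integrableOn heq measurableSet_Ioi

lemma integral_Ioi_split (hn : 0 < n) (hN : ∀ j, ‖N j‖ = 1)
    (hQc : IsCompact (Qset N c 0)) (hQi : (interior (Qset N c 0)).Nonempty) (b : ℝ) :
    ∫ ρ in Ioi b, (volume (innerInterior (Qset N c 0) ρ)).toReal
      = (∫ ρ in Ioi (0:ℝ), (volume (innerInterior (Qset N c 0) ρ)).toReal)
        - ∫ t in (0:ℝ)..b, (volume (innerInterior (Qset N c 0) t)).toReal := by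
  set h : ℝ → ℝ := fun ρ => (volume (innerInterior (Qset N c 0) ρ)).toReal with hh
  rcases le_or_gt 0 b with hb | hb
  · rw [intervalIntegral.integral_of_le hb]
    have hu : Ioc 0 b ∪ Ioi b = Ioi (0:ℝ) := Ioc_union_Ioi_eq_Ioi hb
    rw [← hu, setIntegral_union (Ioc_disjoint_Ioi le_rfl) measurableSet_Ioi
      (integrableOn_hfun_finite hQc measure_Ioc_lt_top.ne)
      (integrableOn_hfun_Ioi hn hN hQc hQi b)]
    ring
  · rw [intervalIntegral.integral_symm, intervalIntegral.integral_of_le hb.le]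
    have hu : Ioc b 0 ∪ Ioi 0 = Ioi b := Ioc_union_Ioi_eq_Ioi hb.le
    rw [← hu, setIntegral_union (Ioc_disjoint_Ioi le_rfl) measurableSet_Ioi
      (integrableOn_hfun_finite hQc measure_Ioc_lt_top.ne)
      (integrableOn_hfun_Ioi hn hN hQc hQi 0)]
    ring

lemma hasDerivAt_G (hn : 0 < n) (hN : ∀ j, ‖N j‖ = 1)
    (hQc : IsCompact (Qset N c 0)) (hQi : (interior (Qset N c 0)).Nonempty)
    {r : ℝ} (hr : 0 ≤ r) :
    HasDerivAt
      (fun s => ∫ ρ in Ioi ((1 + Real.sqrt 2) * s),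
        (volume (innerInterior (Qset N c 0) ρ)).toReal)
      (-((1 + Real.sqrt 2)
        * (volume (innerInterior (Qset N c 0) ((1 + Real.sqrt 2) * r))).toReal)) r := by
  set h : ℝ → ℝ := fun ρ => (volume (innerInterior (Qset N c 0) ρ)).toReal with hh
  set b := (1 + Real.sqrt 2) * r with hb
  have hs2 : (0:ℝ) < Real.sqrt 2 := Real.sqrt_pos.2 (by norm_num)
  have hb0 : 0 ≤ b := by
    rw [hb]
    have : (0:ℝ) ≤ 1 + Real.sqrt 2 := by linarith
    positivity
  have hΦ : HasDerivAt (fun u => ∫ t in (0:ℝ)..u, h t) (h b) b := by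
    apply intervalIntegral.integral_hasDerivAt_right
    · rw [intervalIntegrable_iff]
      exact integrableOn_hfun_finite hQc measure_Ioc_lt_top.ne
    · exact ((measurable_hfun hQc).stronglyMeasurable).stronglyMeasurableAtFilter
    · exact continuousAt_hfun hn hN hQc hQi hb0
  have hL : HasDerivAt (fun s : ℝ => (1 + Real.sqrt 2) * s) (1 + Real.sqrt 2) r := by
    simpa using (hasDerivAt_id r).const_mul (1 + Real.sqrt 2)
  have hcomp := HasDerivAt.comp r hΦ hL
  have hGrw : (fun s => ∫ ρ in Ioi ((1 + Real.sqrt 2) * s), h ρ)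
      = (fun s => (∫ ρ in Ioi (0:ℝ), h ρ)
          - ∫ t in (0:ℝ)..((1 + Real.sqrt 2) * s), h t) := by
    funext s
    exact integral_Ioi_split hn hN hQc hQi _
  rw [hGrw]
  have hfinal := (hasDerivAt_const r (∫ ρ in Ioi (0:ℝ), h ρ)).sub hcomp
  refine HasDerivAt.congr_deriv hfinal ?_
  ring

end HalfSpaces


/-- For a `d`-polytope `P` with inradius `g` and roof `Γ(P)`:
`vol_{d+1}(Γ(P)) = ∫₀^∞ vol_d(P(ρ)) dρ`, more generally
`W_{Γ(P)}(r) = ∫_{(1+√2)r}^∞ vol_d(P(ρ)) dρ` for `r ≥ 0`, and consequently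
`W'_{Γ(P)}(r) = -(1+√2) W_P((1+√2)r)` on `[0,∞)`. -/
theorem statement19 {d m : ℕ} (hd : 0 < d) (P : Set (EuclideanSpace ℝ (Fin d)))
    (N : Fin m → EuclideanSpace ℝ (Fin d)) (c : Fin m → ℝ)
    (hN : ∀ j, ‖N j‖ = 1)
    (hP : P = ⋂ j, {x : EuclideanSpace ℝ (Fin d) | c j ≤ ⟪x, N j⟫})
    (hcomp : IsCompact P)
    (hint : (interior P).Nonempty)
    (g : ℝ) (hg : g = inradius P) :
    ((volume (roofOf P g)).toReal =
      ∫ ρ in Ioi (0 : ℝ), (volume (innerInterior P ρ)).toReal) ∧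
    (∀ r : ℝ, 0 ≤ r →
      (volume (innerInterior (roofOf P g) r)).toReal =
        ∫ ρ in Ioi ((1 + Real.sqrt 2) * r), (volume (innerInterior P ρ)).toReal) ∧
    (∀ r : ℝ, 0 ≤ r →
      HasDerivWithinAt (fun s => (volume (innerInterior (roofOf P g) s)).toReal)
        (-(1 + Real.sqrt 2) * (volume (innerInterior P ((1 + Real.sqrt 2) * r))).toReal)
        (Ici 0) r) := by
  haveI hnontriv : Nontrivial (EuclideanSpace ℝ (Fin d)) := by
    refine ⟨EuclideanSpace.single ⟨0, hd⟩ 1, 0, ?_⟩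
    intro heq
    have := congrArg (fun v : EuclideanSpace ℝ (Fin d) => v ⟨0, hd⟩) heq
    simp [EuclideanSpace.single_apply] at this
  have hm : m ≠ 0 := by
    rintro rfl
    rw [hP, iInter_of_empty] at hcomp
    exact hcomp.ne_univ rfl
  haveI : Nonempty (Fin m) := ⟨⟨0, Nat.pos_of_ne_zero hm⟩⟩
  have hP' : P = Qset N c 0 := by
    rw [hP]
    ext x
    simp [Qset]
  subst hg
  subst hP'
  have hd1 : 0 < d + 1 := Nat.succ_pos d
  have hRc := roofQset_isCompact hN hcomp
  have hRi := roofQset_interior_nonempty hN hint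
  have hroof : roofOf (Qset N c 0) (inradius (Qset N c 0)) = Qset (roofN N) (roofC c) 0 :=
    roofOf_eq hd hN hcomp hint
  have hs2 : (0:ℝ) < Real.sqrt 2 := Real.sqrt_pos.2 (by norm_num)
  have hfin := volume_innerInterior_ne_top (N := N) (c := c) hcomp
  have key : ∀ r : ℝ, 0 ≤ r →
      (volume (innerInterior (roofOf (Qset N c 0) (inradius (Qset N c 0))) r)).toReal
        = ∫ ρ in Ioi ((1 + Real.sqrt 2) * r),
            (volume (innerInterior (Qset N c 0) ρ)).toReal := by
    intro r hr
    rw [hroof, innerInterior_Qset hd1 (norm_roofN hN) hRc hRi hr, volume_roofQset hN r]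
    have ha : 0 ≤ (1 + Real.sqrt 2) * r := by positivity
    have hcong : ∫⁻ ρ in Ioi ((1 + Real.sqrt 2) * r), volume (Qset N c ρ)
        = ∫⁻ ρ in Ioi ((1 + Real.sqrt 2) * r),
            volume (innerInterior (Qset N c 0) ρ) := by
      refine setLIntegral_congr_fun measurableSet_Ioi (fun ρ hρ => ?_)
      rw [innerInterior_Qset hd hN hcomp hint (ha.trans (le_of_lt hρ))]
    rw [hcong]
    refine (integral_toReal ?_ ?_).symm
    · exact (Antitone.measurable (fun ρ σ hle =>
        measure_mono (innerInterior_antitone _ hle))).aemeasurable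
    · exact Filter.Eventually.of_forall fun ρ => (hfin ρ).lt_top
  refine ⟨?_, key, ?_⟩
  · have h0 := key 0 le_rfl
    rw [innerInterior_of_nonpos le_rfl, mul_zero] at h0
    exact h0
  · intro r hr
    have hG := hasDerivAt_G hd hN hcomp hint hr
    rw [neg_mul]
    exact (hG.hasDerivWithinAt).congr (fun s hs => key s hs) (key r hr)
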